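/- arXiv:2208.11365 — 7 statements merged into one kernel-verified Lean document; each statement's English description precedes it below -/
import Mathlib

section
/- Let p be a prime, K a field of characteristic p, D a derivation on K, and a ∈ K. Then, as F_p-linear endomorphisms of K, (D + m_a)^p = D^p + m_{a^p + D^{p-1}(a)}; equivalently, for every g ∈ K, applying the p-th iterate of the map g ↦ D(g) + a·g to g yields D^p(g) + (a^p + D^{p-1}(a))·g. -/
/-!
In a ring `R` of characteristic `p`, put `z = x T + y` in `R[T]`. Then
`d(z^p)/dT = ∑ z^i x z^(p-1-i) = ad_z^(p-1) x`, the last step because `(p-1).choose i ≡ (-1)^i`.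
When `x` commutes with every `ad_y^k x`, this is the constant `ad_y^(p-1) x`; a polynomial of
degree `≤ p` with constant derivative has no terms of degree `2, …, p-1` in characteristic `p`,
so `z^p = x^p T^p + (ad_y^(p-1) x) T + y^p`, and `T = 1` gives Jacobson's formula
`(x + y)^p = x^p + y^p + ad_y^(p-1) x`. For a derivation `D`, the Leibniz rule says
`ad_D^k (m_a) = m_(D^k a)`, so the formula applies in `End(K)` to `x = m_a`, `y = D`.
-/

open Polynomial Finset

theorem Nat.Prime.cast_choose_sub_one {R : Type*} [Ring R] {p : ℕ} [CharP R p] (hp : p.Prime)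
    {k : ℕ} (hk : k < p) : (((p - 1).choose k : ℕ) : R) = (-1) ^ k := by
  induction k with
  | zero => simp
  | succ k ih =>
    have hpascal : (p - 1).choose k + (p - 1).choose (k + 1) = p.choose (k + 1) := by
      conv_rhs => rw [← Nat.sub_add_cancel hp.one_le]
      exact (Nat.choose_succ_succ' _ _).symm
    have hsum : (((p - 1).choose k : ℕ) : R) + (((p - 1).choose (k + 1) : ℕ) : R) = 0 := by
      rw [← Nat.cast_add, hpascal, CharP.cast_eq_zero_iff R p]
      exact hp.dvd_choose_self k.succ_ne_zero hk
    rw [ih (by omega)] at hsum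
    rw [pow_succ, mul_neg_one, eq_neg_of_add_eq_zero_right hsum]

theorem Commute.sub_pow_prime_sub_one {R : Type*} [Ring R] {p : ℕ} [CharP R p] (hp : p.Prime)
    {x y : R} (h : Commute x y) :
    (x - y) ^ (p - 1) = ∑ i ∈ range p, x ^ i * y ^ (p - 1 - i) := by
  rw [sub_eq_add_neg, (h.neg_right).add_pow, Nat.sub_add_cancel hp.one_le]
  refine sum_congr rfl fun i hi => ?_
  have hi : i < p := mem_range.1 hi
  rw [← Nat.choose_symm (by omega), hp.cast_choose_sub_one (by omega), mul_assoc,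
    ← (Commute.neg_one_right (-y)).mul_pow, mul_neg_one, neg_neg]

instance Module.End.charP_of_algebra {R A : Type*} [CommSemiring R] [Semiring A] [Algebra R A]
    {p : ℕ} [CharP A p] : CharP (Module.End R A) p :=
  charP_of_injective_ringHom (Algebra.lmul_injective (R := R) (A := A)) p

theorem sum_pow_mul_pow_eq_iterate_commutator {R : Type*} [Ring R] {p : ℕ} [CharP R p]
    (hp : p.Prime) (z w : R) :
    ∑ i ∈ range p, z ^ i * w * z ^ (p - 1 - i) = (fun v => z * v - v * z)^[p - 1] w := by
  have hsub := (LinearMap.commute_mulLeft_right (R := ℤ) z z).sub_pow_prime_sub_one hp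
  have hcoe : ⇑(LinearMap.mulLeft ℤ z - LinearMap.mulRight ℤ z) = fun v => z * v - v * z := rfl
  rw [← hcoe, ← Module.End.pow_apply, hsub, LinearMap.sum_apply]
  simp only [Module.End.mul_apply, LinearMap.pow_mulLeft, LinearMap.pow_mulRight,
    LinearMap.mulLeft_apply, LinearMap.mulRight_apply, mul_assoc]

theorem Polynomial.derivative_pow_eq_sum {R : Type*} [Semiring R] (q : R[X]) (n : ℕ) :
    derivative (q ^ n) = ∑ i ∈ range n, q ^ i * derivative q * q ^ (n - 1 - i) := by
  induction n with
  | zero => simp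
  | succ n ih =>
    rw [pow_succ, derivative_mul, ih, sum_mul, sum_range_succ]
    congr 1
    · refine sum_congr rfl fun i hi => ?_
      rw [mul_assoc, ← pow_succ, show n - 1 - i + 1 = n + 1 - 1 - i by
        have := mem_range.1 hi; omega]
    · simp

theorem Polynomial.eq_of_natDegree_le_of_derivative_eq_C {R : Type*} [Ring R] {p : ℕ} [CharP R p]
    (hp : p.Prime) {q : R[X]} {c : R} (hdeg : q.natDegree ≤ p) (hder : derivative q = C c) :
    q = C (q.coeff p) * X ^ p + C c * X + C (q.coeff 0) := by
  have hcoeff (j : ℕ) : q.coeff (j + 1) * ((j + 1 : ℕ) : R) = if j = 0 then c else 0 := by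
    rw [← coeff_C, ← hder, coeff_derivative, Nat.cast_succ]
  ext k
  simp only [coeff_add, coeff_C_mul, coeff_X_pow, coeff_X, coeff_C]
  rcases k with _ | j
  · simp [hp.ne_zero.symm]
  rcases Nat.lt_trichotomy (j + 1) p with hlt | heq | hgt
  · have hunit : IsUnit ((j + 1 : ℕ) : R) :=
      (CharP.isUnit_natCast_iff hp).2 (Nat.not_dvd_of_pos_of_lt j.succ_pos hlt)
    have h := hcoeff j
    rcases j with _ | j
    · simpa [hlt.ne] using h
    · rw [if_neg j.succ_ne_zero, hunit.mul_left_eq_zero] at h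
      simp [h, hlt.ne]
  · subst heq
    simp [show j ≠ 0 by have := hp.two_le; omega]
  · rw [coeff_eq_zero_of_natDegree_lt (hdeg.trans_lt hgt)]
    simp [hgt.ne', show j ≠ 0 by have := hp.two_le; omega]

theorem add_pow_prime_eq_of_commute_iterate_commutator {R : Type*} [Ring R] {p : ℕ} [CharP R p]
    (hp : p.Prime) {x y : R} (hx : ∀ k, Commute x ((fun v => y * v - v * y)^[k] x)) :
    (x + y) ^ p = x ^ p + y ^ p + (fun v => y * v - v * y)^[p - 1] x := by
  set z : R[X] := C x * X + C y
  have hz_deg : z.natDegree ≤ 1 := natDegree_linear_le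
  have hz_der : derivative z = C x := by simp [z]
  have hz_iterate (k : ℕ) : (fun v => z * v - v * z)^[k] (C x) =
      C ((fun v => y * v - v * y)^[k] x) := by
    induction k with
    | zero => rfl
    | succ k ih =>
      rw [Function.iterate_succ_apply', ih, Function.iterate_succ_apply']
      simp only [z, add_mul, mul_add, mul_assoc, X_mul_C, ← mul_assoc (C _) (C _), ← C_mul,
        (hx k).eq, C_sub]
      abel
  have hder : derivative (z ^ p) = C ((fun v => y * v - v * y)^[p - 1] x) := by
    rw [derivative_pow_eq_sum, hz_der, sum_pow_mul_pow_eq_iterate_commutator hp, hz_iterate]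
  have hexpand := eq_of_natDegree_le_of_derivative_eq_C hp
    (natDegree_pow_le_of_le p hz_deg |>.trans_eq (mul_one p)) hder
  have htop : (z ^ p).coeff p = x ^ p := by
    simpa [z] using coeff_pow_of_natDegree_le (m := p) hz_deg
  have hbot : (z ^ p).coeff 0 = y ^ p := by
    rw [← constantCoeff_apply, map_pow]
    simp [z]
  let eval_one : R[X] →+* R := eval₂RingHom' (RingHom.id R) 1 fun a => Commute.one_right a
  have := congr(eval_one $hexpand)
  simp only [map_add, map_mul, map_pow, htop, hbot, z] at this
  simpa [eval_one, add_right_comm] using this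

namespace Derivation

variable {R A : Type*} [CommRing R] [CommRing A] [Algebra R A]

theorem iterate_commutator_mulLeft (D : Derivation R A A) (a : A) (k : ℕ) :
    (fun v => (D : Module.End R A) * v - v * D)^[k] (LinearMap.mulLeft R a) =
      LinearMap.mulLeft R (D^[k] a) := by
  induction k with
  | zero => rfl
  | succ k ih =>
    rw [Function.iterate_succ_apply', ih, Function.iterate_succ_apply']
    ext v
    simp [D.leibniz, mul_comm]

theorem toLinearMap_add_mulLeft_pow_prime {p : ℕ} [CharP A p] (hp : p.Prime)
    (D : Derivation R A A) (a : A) :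
    ((D : Module.End R A) + LinearMap.mulLeft R a) ^ p =
      (D : Module.End R A) ^ p + LinearMap.mulLeft R (a ^ p + D^[p - 1] a) := by
  have hcomm (k : ℕ) : Commute (LinearMap.mulLeft R a)
      ((fun v => (D : Module.End R A) * v - v * D)^[k] (LinearMap.mulLeft R a)) := by
    rw [iterate_commutator_mulLeft]
    ext v
    simp [mul_left_comm]
  rw [add_comm, add_pow_prime_eq_of_commute_iterate_commutator hp hcomm,
    iterate_commutator_mulLeft, LinearMap.pow_mulLeft]
  ext v
  simp only [LinearMap.add_apply, LinearMap.mulLeft_apply, add_mul]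
  abel

end Derivation

/-- Let `p` be a prime, `K` a field of characteristic `p`, `D` a derivation on `K`
(an additive map satisfying the Leibniz rule), and `a ∈ K`. Then, as maps on `K`,
`(D + m_a)^p = D^p + m_{a^p + D^{p-1}(a)}`: for every `g ∈ K`, the `p`-th iterate of
`g ↦ D(g) + a·g` applied to `g` equals `D^p(g) + (a^p + D^{p-1}(a))·g`. -/
theorem jacobson_formula
    (p : ℕ) (hp : p.Prime) (K : Type*) [Field K] [CharP K p]
    (D : K → K)
    (hadd : ∀ u v : K, D (u + v) = D u + D v)
    (hleib : ∀ u v : K, D (u * v) = u * D v + v * D u)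
    (a : K) :
    ∀ g : K, (fun g : K => D g + a * g)^[p] g
      = D^[p] g + (a ^ p + D^[p - 1] a) * g := by
  intro g
  let δ : Derivation ℤ K K := Derivation.mk' (AddMonoidHom.mk' D hadd).toIntLinearMap hleib
  have := congr($(δ.toLinearMap_add_mulLeft_pow_prime hp a) g)
  simp only [Module.End.pow_apply, LinearMap.add_apply, LinearMap.mulLeft_apply] at this
  exact this
end

section
/- Let p be a prime, K a field of characteristic p, and D a derivation on K whose p-th iterate is the zero map (D^p = 0). Then for h ∈ K one has D^{p-1}(h) + h^p = 0 if and only if there exists g ∈ K, g ≠ 0, with h = D(g)/g. In other words, the solution set of the homogeneous p-Riccati equation is exactly the set of logarithmic derivatives of nonzero elements of K. -/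
/-!
Write `∇ = D + h` for the twisted operator `x ↦ D x + h * x`. If `h = D g / g`, then
`∇ = g⁻¹ ∘ D ∘ g`, so `g * ∇^p 1 = D^p g = 0`. Conversely, if `∇^p 1 = 0`, the last nonzero term
`g₀` of the sequence `1, ∇ 1, ∇² 1, …` satisfies `∇ g₀ = 0`, that is `h = D (g₀⁻¹) / g₀⁻¹`. Both
directions therefore reduce to Hochschild's formula `∇^p 1 = h^p + D^{p-1} h`, valid for every
derivation in characteristic `p`.

To prove it, deform `h` to `λ h` over the polynomial ring in `λ`, with `D` acting on
coefficients. Then `P(λ) = (D + λ h)^p 1` has degree `p`, leading coefficient `h^p` and constant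
term `D^p 1 = 0`. Since `d/dλ` commutes with `D + λ h` up to multiplication by `h`, the derivative
of `(D + λ h)^n 1` is a binomial combination of the `D^i h * (D + λ h)^j 1`; for `n = p` only
`D^{p-1} h` survives. As `2, …, p-1` are invertible, all middle coefficients of `P` vanish, and
`P(1) = h^p + D^{p-1} h`.
-/

open Finset Polynomial

lemma sum_antidiagonal_choose_succ_succ_nsmul {M : Type*} [AddCommMonoid M] (f : ℕ → ℕ → M)
    (n : ℕ) :
    ∑ ij ∈ antidiagonal (n + 1), (n + 2).choose (ij.1 + 1) • f ij.1 ij.2 =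
      f 0 (n + 1) + ∑ ij ∈ antidiagonal n,
        (n + 1).choose (ij.1 + 1) • (f (ij.1 + 1) ij.2 + f ij.1 (ij.2 + 1)) := by
  simp only [Nat.choose_succ_succ (n + 1), add_nsmul, sum_add_distrib, nsmul_add]
  rw [Nat.sum_antidiagonal_succ, Nat.sum_antidiagonal_succ']
  simp [add_assoc]

lemma sum_antidiagonal_choose_succ_prime_nsmul {R : Type*} [Ring R] {p : ℕ} [CharP R p]
    (hp : p.Prime) (f : ℕ × ℕ → R) :
    ∑ ij ∈ antidiagonal (p - 1), p.choose (ij.1 + 1) • f ij = f (p - 1, 0) := by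
  rw [sum_eq_single (p - 1, 0)]
  · simp [Nat.sub_add_cancel hp.one_le]
  · rintro ⟨i, j⟩ hij hne
    rw [HasAntidiagonal.mem_antidiagonal] at hij
    have hdvd : p ∣ p.choose (i + 1) := hp.dvd_choose_self i.succ_ne_zero (by grind)
    rw [nsmul_eq_mul, (CharP.cast_eq_zero_iff R p _).2 hdvd, zero_mul]
  · simp

lemma exists_ne_zero_apply_eq_zero_of_iterate_eq_zero {M : Type*} [Zero M] {f : M → M} {n : ℕ}
    {x : M} (hx : x ≠ 0) (hfx : f^[n] x = 0) : ∃ y ≠ 0, f y = 0 := by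
  induction n generalizing x with
  | zero => exact absurd hfx hx
  | succ n ih =>
    by_cases h : f x = 0
    · exact ⟨x, hx, h⟩
    · exact ih h hfx

namespace Derivation

variable {R A : Type*} [CommRing R] [CommRing A] [Algebra R A] (δ : Derivation R A A)

def twist (a : A) : A →+ A := δ.toLinearMap.toAddMonoidHom + AddMonoidHom.mulLeft a

lemma twist_apply (a x : A) : δ.twist a x = δ x + a * x := rfl

lemma twist_mul (a x y : A) : δ.twist a (x * y) = δ x * y + x * δ.twist a y := by
  simp only [twist_apply, leibniz, smul_eq_mul]
  ring

theorem twist_iterate_commutator {a c : A} {d : A → A}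
    (hd : ∀ y, d (δ.twist a y) = δ.twist a (d y) + c * y) (n : ℕ) (y : A) :
    d ((δ.twist a)^[n + 1] y) = (δ.twist a)^[n + 1] (d y) +
      ∑ ij ∈ antidiagonal n, (n + 1).choose (ij.1 + 1) • (δ^[ij.1] c * (δ.twist a)^[ij.2] y) := by
  induction n with
  | zero => simp [hd]
  | succ n ih =>
    rw [Function.iterate_succ_apply' _ (n + 1), hd, ih, map_add, map_sum,
      sum_antidiagonal_choose_succ_succ_nsmul (fun i j => δ^[i] c * (δ.twist a)^[j] y)]
    simp only [map_nsmul, twist_mul, Function.iterate_succ_apply', Function.iterate_zero_apply]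
    abel

theorem map_twist_iterate {B : Type*} [CommRing B] [Algebra R B] (δ' : Derivation R B B)
    (φ : A →+* B) (hφ : ∀ x, φ (δ x) = δ' (φ x)) (a x : A) (n : ℕ) :
    φ ((δ.twist a)^[n] x) = (δ'.twist (φ a))^[n] (φ x) := by
  induction n with
  | zero => rfl
  | succ n ih => simp only [Function.iterate_succ_apply', twist_apply, map_add, map_mul, hφ, ih]

theorem iterate_mul_of_apply_eq_mul {a g : A} (hg : δ g = a * g) (n : ℕ) (y : A) :
    δ^[n] (g * y) = g * (δ.twist a)^[n] y := by
  induction n with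
  | zero => rfl
  | succ n ih =>
    rw [Function.iterate_succ_apply', ih, leibniz, hg, Function.iterate_succ_apply', twist_apply,
      smul_eq_mul, smul_eq_mul]
    ring

noncomputable def coeffwise : Derivation R A[X] A[X] :=
  PolynomialModule.equivPolynomialSelf.compDer δ.mapCoeffs

@[simp]
lemma coeff_coeffwise (f : A[X]) (n : ℕ) : (δ.coeffwise f).coeff n = δ (f.coeff n) := rfl

lemma coeffwise_C (a : A) : δ.coeffwise (C a) = C (δ a) := by
  ext n
  simp only [coeff_coeffwise, coeff_C]
  split_ifs <;> simp

lemma coeffwise_iterate_C (a : A) (n : ℕ) : δ.coeffwise^[n] (C a) = C (δ^[n] a) := by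
  induction n with
  | zero => rfl
  | succ n ih => rw [Function.iterate_succ_apply', ih, coeffwise_C, Function.iterate_succ_apply']

lemma derivative_coeffwise (f : A[X]) :
    derivative (δ.coeffwise f) = δ.coeffwise (derivative f) := by
  ext n
  simp [coeff_derivative, leibniz, mul_comm]

lemma eval_coeffwise {c : A} (hc : δ c = 0) (f : A[X]) :
    (δ.coeffwise f).eval c = δ (f.eval c) := by
  induction f using Polynomial.induction_on' with
  | add f g hf hg => simp [hf, hg]
  | monomial n b =>
    have : δ.coeffwise (monomial n b) = monomial n (δ b) := by
      ext m
      simp only [coeff_coeffwise, coeff_monomial]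
      split_ifs <;> simp
    simp [this, leibniz_pow, hc, mul_comm]

variable (a : A)

lemma coeff_zero_twist_coeffwise (f : A[X]) :
    (δ.coeffwise.twist (C a * X) f).coeff 0 = δ (f.coeff 0) := by
  simp [twist_apply, mul_assoc]

lemma coeff_succ_twist_coeffwise (f : A[X]) (n : ℕ) :
    (δ.coeffwise.twist (C a * X) f).coeff (n + 1) = δ (f.coeff (n + 1)) + a * f.coeff n := by
  simp [twist_apply, mul_assoc, coeff_C_mul]

lemma coeff_zero_twist_coeffwise_iterate (n : ℕ) :
    ((δ.coeffwise.twist (C a * X))^[n + 1] 1).coeff 0 = 0 := by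
  suffices ∀ m (f : A[X]), ((δ.coeffwise.twist (C a * X))^[m] f).coeff 0 = δ^[m] (f.coeff 0) by
    rw [this, Function.iterate_succ_apply, coeff_one_zero, map_one_eq_zero, iterate_map_zero]
  intro m f
  induction m with
  | zero => rfl
  | succ m ih =>
    rw [Function.iterate_succ_apply', coeff_zero_twist_coeffwise, ih, Function.iterate_succ_apply']

lemma coeff_twist_coeffwise_iterate_of_lt {n m : ℕ} (h : n < m) :
    ((δ.coeffwise.twist (C a * X))^[n] 1).coeff m = 0 := by
  induction n generalizing m with
  | zero => simp [coeff_one, h.ne']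
  | succ n ih =>
    obtain ⟨m, rfl⟩ : ∃ k, m = k + 1 := ⟨m - 1, by omega⟩
    rw [Function.iterate_succ_apply', coeff_succ_twist_coeffwise, ih (by omega), ih (by omega),
      map_zero, mul_zero, add_zero]

lemma coeff_twist_coeffwise_iterate_self (n : ℕ) :
    ((δ.coeffwise.twist (C a * X))^[n] 1).coeff n = a ^ n := by
  induction n with
  | zero => simp
  | succ n ih =>
    rw [Function.iterate_succ_apply', coeff_succ_twist_coeffwise,
      coeff_twist_coeffwise_iterate_of_lt δ a n.lt_succ_self, ih, map_zero, zero_add, pow_succ']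

lemma derivative_twist_coeffwise (f : A[X]) :
    derivative (δ.coeffwise.twist (C a * X) f) =
      δ.coeffwise.twist (C a * X) (derivative f) + C a * f := by
  simp only [twist_apply, derivative_add, derivative_coeffwise, derivative_mul, derivative_C,
    derivative_X]
  ring

lemma derivative_twist_coeffwise_iterate_prime {p : ℕ} [CharP A p] (hp : p.Prime) :
    derivative ((δ.coeffwise.twist (C a * X))^[p] 1) = C (δ^[p - 1] a) := by
  have h := twist_iterate_commutator _ (derivative_twist_coeffwise δ a) (p - 1) 1
  rw [Nat.sub_add_cancel hp.one_le, sum_antidiagonal_choose_succ_prime_nsmul hp] at h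
  simp [h, iterate_map_zero, coeffwise_iterate_C]

theorem twist_iterate_prime_one {p : ℕ} [CharP A p] (hp : p.Prime) :
    (δ.twist a)^[p] 1 = a ^ p + δ^[p - 1] a := by
  set P := (δ.coeffwise.twist (C a * X))^[p] 1
  have hP : P.eval 1 = (δ.twist a)^[p] 1 := by
    have := map_twist_iterate _ δ (evalRingHom 1) (eval_coeffwise δ δ.map_one_eq_zero) (C a * X) 1 p
    rwa [coe_evalRingHom, eval_mul, eval_C, eval_X, mul_one, eval_one] at this
  have hdeg : P.natDegree < p + 1 :=
    Nat.lt_succ_of_le <| natDegree_le_iff_coeff_eq_zero.2 fun m hm =>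
      coeff_twist_coeffwise_iterate_of_lt δ a (by exact_mod_cast hm)
  have hder (m : ℕ) : P.coeff (m + 1) * (m + 1) = if m = 0 then δ^[p - 1] a else 0 := by
    rw [← coeff_derivative, derivative_twist_coeffwise_iterate_prime δ a hp, coeff_C]
  have hcoeff_zero : P.coeff 0 = 0 := by
    simpa [Nat.sub_add_cancel hp.one_le] using coeff_zero_twist_coeffwise_iterate δ a (p - 1)
  have hcoeff_one : P.coeff 1 = δ^[p - 1] a := by simpa using hder 0
  have hcoeff_mid (m : ℕ) (h1 : 1 < m) (hmp : m < p) : P.coeff m = 0 := by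
    obtain ⟨k, rfl⟩ : ∃ k, m = k + 2 := ⟨m - 2, by omega⟩
    have hu : IsUnit ((k + 2 : ℕ) : A) :=
      (CharP.isUnit_natCast_iff hp).2 (Nat.not_dvd_of_pos_of_lt (by omega) hmp)
    push_cast at hu
    refine hu.mul_left_eq_zero.1 ?_
    simpa [add_assoc, one_add_one_eq_two] using hder (k + 1)
  have hcoeff_p : P.coeff p = a ^ p := coeff_twist_coeffwise_iterate_self δ a p
  rw [← hP, eval_eq_sum_range' hdeg, sum_eq_add p 1 hp.one_lt.ne', hcoeff_p, hcoeff_one]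
  · simp
  · intro m hm hne
    rw [mem_range] at hm
    rcases Nat.lt_trichotomy m 1 with h | h | h
    · rw [Nat.lt_one_iff.1 h, hcoeff_zero, zero_mul]
    · exact absurd h hne.2
    · rw [hcoeff_mid m h (by omega), zero_mul]
  · simp
  · simp [hp.ne_zero]

end Derivation

/-- Let `p` be a prime, `K` a field of characteristic `p`, and `D` a derivation on `K`
(an additive map satisfying the Leibniz rule) with `D^p = 0`. Then `h ∈ K` satisfies the
homogeneous `p`-Riccati equation `D^{p-1}(h) + h^p = 0` if and only if `h` is the
logarithmic derivative `D(g)/g` of some nonzero `g ∈ K`. -/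
theorem homogeneous_pRiccati_solutions_eq_logDerivs
    (p : ℕ) (hp : p.Prime) (K : Type*) [Field K] [CharP K p]
    (D : K → K)
    (hadd : ∀ u v : K, D (u + v) = D u + D v)
    (hleib : ∀ u v : K, D (u * v) = u * D v + v * D u)
    (hDp : ∀ a : K, D^[p] a = 0)
    (h : K) :
    D^[p - 1] h + h ^ p = 0 ↔ ∃ g : K, g ≠ 0 ∧ h = D g / g := by
  let δ : Derivation ℤ K K :=
    Derivation.mk' (AddMonoidHom.mk' D hadd).toIntLinearMap hleib
  have hδ : ⇑δ = D := rfl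
  rw [← hδ] at hDp ⊢
  constructor
  · intro hR
    have hnil : (δ.twist h)^[p] 1 = 0 := by
      rw [δ.twist_iterate_prime_one h hp, add_comm, hR]
    obtain ⟨g, hg, hTg⟩ := exists_ne_zero_apply_eq_zero_of_iterate_eq_zero one_ne_zero hnil
    refine ⟨g⁻¹, inv_ne_zero hg, ?_⟩
    rw [δ.twist_apply] at hTg
    rw [δ.leibniz_inv, smul_eq_mul, eq_neg_of_add_eq_zero_left hTg]
    field_simp
  · rintro ⟨g, hg, rfl⟩
    have hconj := δ.iterate_mul_of_apply_eq_mul (div_mul_cancel₀ (δ g) hg).symm p 1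
    rw [mul_one, hDp, δ.twist_iterate_prime_one _ hp, eq_comm, mul_eq_zero] at hconj
    rw [add_comm]
    exact hconj.resolve_left hg
end

section
/- Let p be a prime and K a finite separable field extension of the rational function field F_p(x). Let D be a derivation on K such that D(x) = 1, where x denotes the image in K of the variable of F_p(x) (D is then the unique extension to K of the derivation d/dx). Then the p-th iterate of D is the zero map: D^p(f) = 0 for all f ∈ K. -/
open Finset

/-- Iterated Leibniz rule for a raw derivation on a commutative ring. -/
theorem myIterLeibniz {K : Type*} [CommRing K] (D : K → K)
    (hadd : ∀ u v : K, D (u + v) = D u + D v)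
    (hleib : ∀ u v : K, D (u * v) = u * D v + v * D u) (n : ℕ) (u v : K) :
    D^[n] (u * v) = ∑ k ∈ range (n + 1), (n.choose k : K) * (D^[k] u * D^[n - k] v) := by
  have h0 : D 0 = 0 := by
    have := hadd 0 0; simp at this; exact this
  have hsum : ∀ (s : Finset ℕ) (g : ℕ → K), D (∑ i ∈ s, g i) = ∑ i ∈ s, D (g i) := by
    intro s g
    induction s using Finset.cons_induction with
    | empty => simpa using h0
    | cons a s ha ih => rw [Finset.sum_cons, hadd, ih, Finset.sum_cons]
  have h1 : D 1 = 0 := by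
    have := hleib 1 1; simp at this; exact this
  have hnatD : ∀ m : ℕ, D (m : K) = 0 := by
    intro m
    induction m with
    | zero => simpa using h0
    | succ m ih => rw [Nat.cast_succ, hadd, ih, h1, add_zero]
  have hnat : ∀ (m : ℕ) (a : K), D ((m : K) * a) = (m : K) * D a := by
    intro m a; rw [hleib, hnatD, mul_comm a, zero_mul, add_zero]
  induction n with
  | zero => simp
  | succ n IH =>
    have step : ∀ k, D ((n.choose k : K) * (D^[k] u * D^[n - k] v)) =
        (n.choose k : K) * (D^[k + 1] u * D^[n - k] v) +
        (n.choose k : K) * (D^[k] u * D^[n - k + 1] v) := by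
      intro k
      rw [hnat, hleib, Function.iterate_succ_apply', Function.iterate_succ_apply']
      ring
    rw [Function.iterate_succ_apply', IH, hsum,
      Finset.sum_congr rfl fun k _ => step k, Finset.sum_add_distrib,
      Finset.sum_choose_succ_mul (fun i j => D^[i] u * D^[j] v) n, add_comm]
    congr 1
    · refine Finset.sum_congr rfl fun k hk => ?_
      rw [Finset.mem_range] at hk
      have h : n - k + 1 = n + 1 - k := by omega
      rw [h]

/-- Let `p` be a prime and `K` a finite separable field extension of `𝔽_p(x)`. Let `D`
be a derivation on `K` (an additive map satisfying the Leibniz rule) with `D(x) = 1`,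
where `x` is the image in `K` of the variable of `𝔽_p(x)` (so `D` is the unique extension
of `d/dx` to `K`). Then the `p`-th iterate of `D` is the zero map. -/
theorem iterate_p_of_ddx_eq_zero
    (p : ℕ) [Fact p.Prime] (K : Type*) [Field K]
    [Algebra (RatFunc (ZMod p)) K]
    [FiniteDimensional (RatFunc (ZMod p)) K]
    [Algebra.IsSeparable (RatFunc (ZMod p)) K]
    (D : K → K)
    (hadd : ∀ u v : K, D (u + v) = D u + D v)
    (hleib : ∀ u v : K, D (u * v) = u * D v + v * D u)
    (hx : D (algebraMap (RatFunc (ZMod p)) K RatFunc.X) = 1) :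
    ∀ f : K, D^[p] f = 0 := by
  have hp : p.Prime := Fact.out
  haveI : NeZero p := ⟨hp.ne_zero⟩
  obtain ⟨m, hm⟩ : ∃ m, p = m + 1 := ⟨p - 1, (Nat.succ_pred_eq_of_pos hp.pos).symm⟩
  have h0 : D 0 = 0 := by
    have := hadd 0 0; simp at this; exact this
  have h1 : D 1 = 0 := by
    have := hleib 1 1; simp at this; exact this
  have hDn0 : ∀ n : ℕ, D^[n] (0 : K) = 0 := by
    intro n
    induction n with
    | zero => rfl
    | succ n ih => rw [Function.iterate_succ_apply, h0, ih]
  have hDp1 : D^[p] (1 : K) = 0 := by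
    rw [hm, Function.iterate_succ_apply, h1, hDn0]
  have hDnadd : ∀ (n : ℕ) (u v : K), D^[n] (u + v) = D^[n] u + D^[n] v := by
    intro n
    induction n with
    | zero => intro u v; rfl
    | succ n ih =>
      intro u v
      rw [Function.iterate_succ_apply, Function.iterate_succ_apply,
        Function.iterate_succ_apply, hadd, ih]
  -- characteristic p
  haveI : CharP (RatFunc (ZMod p)) p :=
    charP_of_injective_algebraMap
      (algebraMap (ZMod p) (RatFunc (ZMod p))).injective p
  haveI : CharP K p :=
    charP_of_injective_algebraMap
      (algebraMap (RatFunc (ZMod p)) K).injective p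
  -- `D^[p]` satisfies the Leibniz rule
  have hplb : ∀ u v : K, D^[p] (u * v) = u * D^[p] v + v * D^[p] u := by
    intro u v
    rw [myIterLeibniz D hadd hleib p u v, Finset.sum_range_succ]
    have hmid : ∑ k ∈ range p, (p.choose k : K) * (D^[k] u * D^[p - k] v)
        = (p.choose 0 : K) * (D^[0] u * D^[p - 0] v) := by
      refine Finset.sum_eq_single_of_mem 0 (Finset.mem_range.mpr hp.pos) ?_
      intro k hk hk0
      rw [Finset.mem_range] at hk
      have : (p.choose k : K) = 0 :=
        (CharP.cast_eq_zero_iff K p _).mpr (hp.dvd_choose_self hk0 hk)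
      rw [this, zero_mul]
    rw [hmid]
    simp only [Nat.choose_zero_right, Nat.choose_self, Nat.sub_self, Nat.cast_one,
      Function.iterate_zero, id_eq, Nat.sub_zero, one_mul]
    ring
  -- the kernel of `D^[p]` is a subfield of `K`
  have hinv : ∀ a : K, D^[p] a = 0 → D^[p] a⁻¹ = 0 := by
    intro a ha
    by_cases h : a = 0
    · rw [h, inv_zero]; exact hDn0 p
    · have h2 := hplb a a⁻¹
      rw [mul_inv_cancel₀ h, hDp1, ha, mul_zero, add_zero] at h2
      exact (mul_eq_zero.mp h2.symm).resolve_left h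
  let E : Subfield K :=
    { carrier := {a : K | D^[p] a = 0}
      mul_mem' := by
        intro a b ha hb
        simp only [Set.mem_setOf_eq] at *
        rw [hplb, ha, hb, mul_zero, mul_zero, add_zero]
      one_mem' := hDp1
      add_mem' := by
        intro a b ha hb
        simp only [Set.mem_setOf_eq] at *
        rw [hDnadd, ha, hb, add_zero]
      zero_mem' := hDn0 p
      neg_mem' := by
        intro a ha
        simp only [Set.mem_setOf_eq] at *
        have : D^[p] (-a) + D^[p] a = 0 := by
          rw [← hDnadd, neg_add_cancel]; exact hDn0 p
        rw [ha, add_zero] at this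
        exact this
      inv_mem' := fun a ha => hinv a ha }
  -- the base field lies in the kernel of `D^[p]`
  have halg : ∀ c : RatFunc (ZMod p), D^[p] (algebraMap (RatFunc (ZMod p)) K c) = 0 := by
    have hXmem : RatFunc.X ∈ E.comap (algebraMap (RatFunc (ZMod p)) K) := by
      have hiter : ∀ y : K, D^[p] y = D^[m] (D y) := by
        intro y; rw [hm]; exact Function.iterate_succ_apply D m y
      have : D^[p] (algebraMap (RatFunc (ZMod p)) K RatFunc.X) = 0 := by
        rw [hiter, hx]
        rcases Nat.exists_eq_succ_of_ne_zero
          (show m ≠ 0 by rintro rfl; rw [hm] at hp; exact Nat.not_prime_one hp) with ⟨l, hl⟩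
        rw [hl, Function.iterate_succ_apply, h1, hDn0]
      exact this
    have hpoly : ∀ q : Polynomial (ZMod p),
        algebraMap (Polynomial (ZMod p)) (RatFunc (ZMod p)) q
          ∈ E.comap (algebraMap (RatFunc (ZMod p)) K) := by
      intro q
      induction q using Polynomial.induction_on with
      | C a =>
        obtain ⟨k, rfl⟩ := ZMod.natCast_zmod_surjective a
        rw [map_natCast, map_natCast]
        exact natCast_mem _ k
      | add q r hq hr =>
        rw [map_add]; exact add_mem hq hr
      | monomial n a ih =>
        have : (Polynomial.C a * Polynomial.X ^ (n + 1))
            = (Polynomial.C a * Polynomial.X ^ n) * Polynomial.X := by ring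
        rw [this, map_mul]
        refine mul_mem ih ?_
        rw [RatFunc.algebraMap_X]
        exact hXmem
    intro c
    have : c ∈ E.comap (algebraMap (RatFunc (ZMod p)) K) := by
      rw [← RatFunc.num_div_denom c]
      exact div_mem (hpoly _) (hpoly _)
    exact this
  -- package `D^[p]` as a derivation over `RatFunc (ZMod p)`
  let Dder : Derivation (RatFunc (ZMod p)) K K :=
    { toFun := D^[p]
      map_add' := hDnadd p
      map_smul' := by
        intro c u
        simp only [RingHom.id_apply, smul_eq_mul]
        rw [Algebra.smul_def, Algebra.smul_def, hplb, halg, mul_zero, add_zero]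
      map_one_eq_zero' := hDp1
      leibniz' := by
        intro a b
        simp only [LinearMap.coe_mk, AddHom.coe_mk, smul_eq_mul]
        exact hplb a b }
  -- a derivation on a separable extension vanishes
  intro f
  have hDf : Dder f = 0 := by
    have hsep := Algebra.IsSeparable.isSeparable (RatFunc (ZMod p)) f
    have hne : Polynomial.aeval f (Polynomial.derivative (minpoly (RatFunc (ZMod p)) f)) ≠ 0 :=
      hsep.aeval_derivative_ne_zero (minpoly.aeval _ f)
    have h := Dder.map_aeval (minpoly (RatFunc (ZMod p)) f) f
    rw [minpoly.aeval, map_zero] at h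
    have := h.symm
    rw [smul_eq_mul] at this
    exact (mul_eq_zero.mp this).resolve_left hne
  exact hDf
end

section
/- Let p be a prime and K a finite separable field extension of the rational function field F_p(x). Let D be a derivation on K such that D(x) = 1, where x denotes the image in K of the variable of F_p(x) (D is then the unique extension to K of the derivation d/dx). Then the field of constants of D is exactly the set of p-th powers: for f ∈ K, D(f) = 0 if and only if there exists g ∈ K with f = g^p. -/
/-!
A derivation kills `p`-th powers, so its constants form a subfield `C` with `K^p ⊆ C`, and
`x ∉ C` because `D x = 1`. Since `K / 𝔽_p(x)` is separable, `K` is generated by `K^p` over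
`𝔽_p(x)`; as `𝔽_p(x) ⊆ K^p(x)`, this gives `K = K^p(x)`. As `x^p ∈ K^p` but `x ∉ K^p`, the extension
`K / K^p` has prime degree `p`, so the intermediate field `C ≠ K` must be `K^p`.
-/

open IntermediateField Module Polynomial

theorem Derivation.map_pow_char {R A M : Type*} [CommSemiring R] [CommSemiring A]
    [AddCommMonoid M] [Algebra R A] [Module A M] [Module R M] (D : Derivation R A M) (p : ℕ)
    [CharP A p] (a : A) : D (a ^ p) = 0 := by
  rw [leibniz_pow, ← Nat.cast_smul_eq_nsmul A, CharP.cast_eq_zero, zero_smul]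

section Constants

variable {R K : Type*} [CommRing R] [Field K] [Algebra R K]

def Derivation.fieldOfConstants (D : Derivation R K K) : Subfield K where
  carrier := {a | D a = 0}
  zero_mem' := D.map_zero
  one_mem' := D.map_one_eq_zero
  add_mem' {a b} ha hb := by simp_all
  mul_mem' {a b} ha hb := by simp_all
  neg_mem' {a} ha := by simp_all
  inv_mem' a ha := by simp_all [Derivation.leibniz_inv]

theorem Derivation.mem_fieldOfConstants {D : Derivation R K K} {a : K} :
    a ∈ D.fieldOfConstants ↔ D a = 0 :=
  Iff.rfl

end Constants

theorem IntermediateField.finrank_adjoin_simple_of_pow_mem_bot {F L : Type*} [Field F]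
    [Field L] [Algebra F L] (p : ℕ) [hp : Fact p.Prime] [ExpChar L p] {a : L}
    (ha : a ∉ (⊥ : IntermediateField F L)) (hpow : a ^ p ∈ (⊥ : IntermediateField F L)) :
    finrank F F⟮a⟯ = p := by
  obtain ⟨c, hc⟩ := mem_bot.mp hpow
  have hirr : Irreducible (X ^ p - C c) := by
    refine X_pow_sub_C_irreducible_of_prime hp.out fun b hb => ha (mem_bot.mpr ⟨b, ?_⟩)
    apply frobenius_inj L p
    rw [frobenius_def, frobenius_def, ← map_pow, hb, hc]
  have hmonic : (X ^ p - C c).Monic := monic_X_pow_sub_C c hp.out.ne_zero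
  have hroot : aeval a (X ^ p - C c) = 0 := by simp [hc]
  rw [adjoin.finrank ⟨_, hmonic, hroot⟩, ← minpoly.eq_of_irreducible_of_monic hirr hroot hmonic,
    natDegree_X_pow_sub_C]

theorem Subfield.eq_top_of_algebraMap_mem_of_pow_mem {F K : Type*} [Field F] [Field K]
    [Algebra F K] [Algebra.IsSeparable F K] (p : ℕ) [ExpChar F p] (E : Subfield K)
    (hF : ∀ c, algebraMap F K c ∈ E) (hpow : ∀ a : K, a ^ p ∈ E) : E = ⊤ := by
  have : adjoin F ((· ^ p) '' Set.univ) ≤ E.toIntermediateField hF :=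
    adjoin_le_iff.mpr (by rintro _ ⟨a, -, rfl⟩; exact hpow a)
  rw [← adjoin_eq_adjoin_pow_expChar_of_isSeparable', adjoin_univ, top_le_iff] at this
  exact congrArg IntermediateField.toSubfield this

theorem RatFunc.map_mem_of_map_X_mem (p : ℕ) [Fact p.Prime] {L : Type*} [Field L]
    (φ : RatFunc (ZMod p) →+* L) {E : Subfield L} (hX : φ RatFunc.X ∈ E)
    (c : RatFunc (ZMod p)) : φ c ∈ E := by
  let S := E.comap φ
  have hZ : ∀ c : ZMod p, algebraMap (ZMod p) (RatFunc (ZMod p)) c ∈ S := fun c => by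
    rw [← ZMod.natCast_zmod_val c, map_natCast]
    exact natCast_mem S _
  have := (adjoin_simple_le_iff (K := S.toIntermediateField hZ)).mpr hX
  rw [RatFunc.adjoin_X, top_le_iff] at this
  have hS : S = ⊤ := congrArg IntermediateField.toSubfield this
  exact (hS ▸ Subfield.mem_top c : c ∈ S)

theorem RatFunc.adjoin_algebraMap_X_eq_top (p : ℕ) [Fact p.Prime] (K : Type*) [Field K]
    [Algebra (RatFunc (ZMod p)) K] [Algebra.IsSeparable (RatFunc (ZMod p)) K] [CharP K p] :
    adjoin (frobenius K p).fieldRange {algebraMap (RatFunc (ZMod p)) K RatFunc.X} = ⊤ := by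
  refine toSubfield_injective <|
    Subfield.eq_top_of_algebraMap_mem_of_pow_mem (F := RatFunc (ZMod p)) p _ ?_ fun a => ?_
  · exact RatFunc.map_mem_of_map_X_mem p _ (subset_adjoin _ _ rfl)
  · exact IntermediateField.algebraMap_mem _ (⟨a ^ p, a, rfl⟩ : (frobenius K p).fieldRange)

theorem Derivation.map_eq_zero_iff_mem_fieldRange_frobenius {R K : Type*} [CommRing R]
    [Field K] [Algebra R K] (p : ℕ) [hp : Fact p.Prime] [CharP K p] (D : Derivation R K K)
    {x : K} (hx : D x ≠ 0) (hgen : adjoin (frobenius K p).fieldRange {x} = ⊤) (f : K) :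
    D f = 0 ↔ f ∈ (frobenius K p).fieldRange := by
  refine ⟨fun hf => ?_, by rintro ⟨g, rfl⟩; exact D.map_pow_char p g⟩
  set P := (frobenius K p).fieldRange
  let C : IntermediateField P K :=
    D.fieldOfConstants.toIntermediateField fun ⟨_, g, hg⟩ => hg ▸ D.map_pow_char p g
  have hfinrank : finrank P K = p := by
    rw [← finrank_top', ← hgen]
    refine finrank_adjoin_simple_of_pow_mem_bot p (fun hxP => hx ?_) (mem_bot.mpr ?_)
    · obtain ⟨⟨_, g, rfl⟩, rfl⟩ := mem_bot.mp hxP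
      exact D.map_pow_char p g
    · exact ⟨⟨x ^ p, x, rfl⟩, rfl⟩
  have := isSimpleOrder_of_finrank_prime P K (hfinrank ▸ hp.out)
  obtain hC | hC := eq_bot_or_eq_top C
  · obtain ⟨c, rfl⟩ := mem_bot.mp (hC ▸ (show f ∈ C from hf))
    exact c.2
  · exact absurd (D.mem_fieldOfConstants.mp (hC ▸ mem_top : x ∈ C)) hx

theorem constants_eq_pth_powers_general
    (p : ℕ) [Fact p.Prime] (K : Type*) [Field K]
    [Algebra (RatFunc (ZMod p)) K]
    [Algebra.IsSeparable (RatFunc (ZMod p)) K]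
    (D : K → K)
    (hadd : ∀ u v : K, D (u + v) = D u + D v)
    (hleib : ∀ u v : K, D (u * v) = u * D v + v * D u)
    (hx : D (algebraMap (RatFunc (ZMod p)) K RatFunc.X) = 1) :
    ∀ f : K, D f = 0 ↔ ∃ g : K, f = g ^ p := by
  have : CharP K p := charP_of_injective_algebraMap (algebraMap (RatFunc (ZMod p)) K).injective p
  let D' : Derivation ℤ K K := Derivation.mk' (AddMonoidHom.mk' D hadd).toIntLinearMap hleib
  have hD'x : D' (algebraMap (RatFunc (ZMod p)) K RatFunc.X) ≠ 0 := by
    rw [show D' _ = 1 from hx]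
    exact one_ne_zero
  intro f
  change D' f = 0 ↔ _
  rw [D'.map_eq_zero_iff_mem_fieldRange_frobenius p hD'x (RatFunc.adjoin_algebraMap_X_eq_top p K)]
  exact ⟨fun ⟨g, hg⟩ => ⟨g, hg.symm⟩, fun ⟨g, hg⟩ => ⟨g, hg.symm⟩⟩

/-- Let `p` be a prime and `K` a finite separable field extension of `𝔽_p(x)`. Let `D`
be a derivation on `K` (an additive map satisfying the Leibniz rule) with `D(x) = 1`,
where `x` is the image in `K` of the variable of `𝔽_p(x)` (so `D` is the unique extension
of `d/dx` to `K`). Then the field of constants of `D` is exactly the set of `p`-th powers: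
for `f ∈ K`, `D(f) = 0` if and only if `f = g^p` for some `g ∈ K`. -/
theorem constants_eq_pth_powers
    (p : ℕ) [Fact p.Prime] (K : Type*) [Field K]
    [Algebra (RatFunc (ZMod p)) K]
    [FiniteDimensional (RatFunc (ZMod p)) K]
    [Algebra.IsSeparable (RatFunc (ZMod p)) K]
    (D : K → K)
    (hadd : ∀ u v : K, D (u + v) = D u + D v)
    (hleib : ∀ u v : K, D (u * v) = u * D v + v * D u)
    (hx : D (algebraMap (RatFunc (ZMod p)) K RatFunc.X) = 1) :
    ∀ f : K, D f = 0 ↔ ∃ g : K, f = g ^ p :=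
  constants_eq_pth_powers_general p K D hadd hleib hx
end

section
/- Let p be a prime and K a field of characteristic p such that K has degree p over its subfield K^p of p-th powers (i.e., the dimension of K as a vector space over the image of the Frobenius endomorphism is p). Then for every nonzero derivation D on K, the kernel of D is exactly K^p: for f ∈ K, D(f) = 0 if and only if there exists g ∈ K with f = g^p. -/
set_option synthInstance.maxHeartbeats 1000000
set_option maxHeartbeats 1000000


/-- Let `p` be a prime and `K` a field of characteristic `p` such that `K` has degree `p`
over its subfield `K^p` of `p`-th powers (the range of the Frobenius endomorphism). Then
for every nonzero derivation `D` on `K` (an additive map satisfying the Leibniz rule),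
the kernel of `D` is exactly `K^p`: for `f ∈ K`, `D(f) = 0` iff `f = g^p` for some `g`. -/
theorem ker_derivation_eq_pth_powers_of_finrank_frobenius_eq
    (p : ℕ) [Fact p.Prime] (K : Type*) [Field K] [CharP K p]
    (hdim : Module.finrank (↥(frobenius K p).fieldRange) K = p)
    (D : K → K)
    (hadd : ∀ u v : K, D (u + v) = D u + D v)
    (hleib : ∀ u v : K, D (u * v) = u * D v + v * D u)
    (hD : ∃ a : K, D a ≠ 0) :
    ∀ f : K, D f = 0 ↔ ∃ g : K, f = g ^ p := by
  have hp : p.Prime := Fact.out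
  -- basic facts about D
  have hD1 : D 1 = 0 := by
    have h := hleib 1 1
    simp only [one_mul] at h
    exact (left_eq_add.mp h)
  have hD0 : D 0 = 0 := by
    have h := hadd 0 0
    rw [add_zero] at h
    exact (left_eq_add.mp h)
  have hpow : ∀ (g : K) (n : ℕ), D (g ^ (n + 1)) = (n + 1 : K) * g ^ n * D g := by
    intro g n
    induction n with
    | zero => simp
    | succ n ih =>
      have h2 : g ^ (n + 2) = g * g ^ (n + 1) := by ring
      rw [h2, hleib, ih]
      push_cast
      ring
  have hDpow : ∀ g : K, D (g ^ p) = 0 := by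
    intro g
    obtain ⟨m, hm⟩ : ∃ m, p = m + 1 := ⟨p - 1, (Nat.succ_pred_eq_of_pos hp.pos).symm⟩
    rw [hm, hpow]
    have h3 : ((m : K) + 1) = ((p : ℕ) : K) := by rw [hm]; push_cast; ring
    rw [h3, CharP.cast_eq_zero K p, zero_mul, zero_mul]
  have hDneg : ∀ u : K, D (-u) = - D u := by
    intro u
    have h := hadd u (-u)
    rw [add_neg_cancel, hD0] at h
    exact eq_neg_of_add_eq_zero_right h.symm
  have hDinv : ∀ u : K, D u = 0 → D u⁻¹ = 0 := by
    intro u hu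
    rcases eq_or_ne u 0 with rfl | hu0
    · simpa using hD0
    · have h := hleib u u⁻¹
      rw [mul_inv_cancel₀ hu0, hD1, hu, mul_zero, add_zero] at h
      exact (mul_eq_zero.mp h.symm).resolve_left hu0
  -- the kernel of D as a subfield
  set k : Subfield K := (frobenius K p).fieldRange with hk
  let F : Subfield K :=
    { carrier := {f : K | D f = 0}
      zero_mem' := hD0
      one_mem' := hD1
      add_mem' := fun {a b} ha hb => by
        show D (a + b) = 0
        rw [hadd, ha, hb, add_zero]
      mul_mem' := fun {a b} ha hb => by
        show D (a * b) = 0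
        rw [hleib, ha, hb, mul_zero, mul_zero, add_zero]
      neg_mem' := fun {a} ha => by
        show D (-a) = 0
        rw [hDneg, ha, neg_zero]
      inv_mem' := fun a ha => hDinv a ha }
  have halg : ∀ x : k, algebraMap k K x ∈ F := by
    rintro ⟨x, g, rfl⟩
    exact hDpow g
  let F' : IntermediateField k K := Subfield.toIntermediateField F halg
  have hfin : FiniteDimensional k K := by
    refine FiniteDimensional.of_finrank_pos ?_
    rw [hdim]; exact hp.pos
  have htower : Module.finrank (↥k) F' * Module.finrank F' K = p := by
    rw [Module.finrank_mul_finrank, hdim]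
  rcases hp.eq_one_or_self_of_dvd (Module.finrank F' K)
      ⟨Module.finrank (↥k) F', by rw [← htower]; ring⟩ with h1 | h1
  · -- finrank F' K = 1 : then everything is in the kernel, contradicting hD
    exfalso
    obtain ⟨a, ha⟩ := hD
    obtain ⟨c, hc⟩ := (finrank_eq_one_iff_of_nonzero' (1 : K) one_ne_zero).mp h1 a
    have hca : (c : K) = a := by simpa [Algebra.smul_def] using hc
    exact ha (by rw [← hca]; exact c.2)
  · -- finrank F' K = p : then F' = ⊥, so the kernel is exactly K^p
    have h2 := htower
    rw [h1] at h2
    have h3 : Module.finrank (↥k) F' = 1 :=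
      Nat.eq_of_mul_eq_mul_right hp.pos (by rw [h2, one_mul])
    have hbot : F' = ⊥ := IntermediateField.finrank_eq_one_iff.mp h3
    intro f
    constructor
    · intro hf
      have hfF : f ∈ F' := hf
      rw [hbot, IntermediateField.mem_bot] at hfF
      obtain ⟨x, hx⟩ := hfF
      obtain ⟨y, g, hg⟩ := x
      refine ⟨g, ?_⟩
      rw [← hx]
      show y = g ^ p
      rw [← hg, frobenius_def]
    · rintro ⟨g, rfl⟩
      exact hDpow g
end

section
/- Let p be a prime and K a finite separable field extension of the rational function field F_p(x). Then K has degree p over its subfield K^p of p-th powers: the dimension of K as a vector space over the range of the Frobenius endomorphism f ↦ f^p equals p. -/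
/-!
Frobenius is a field isomorphism `K ≃ K^p` carrying `F` onto `F^p`, so `[K^p : F^p] = [K : F]`.
Comparing the towers `F^p ⊆ F ⊆ K` and `F^p ⊆ K^p ⊆ K` gives `[K : K^p] = [F : F^p]` for every
finite extension `K / F`. For `F = k(X)` with `k` perfect, `F^p` contains `k` and `X^p` but not
`X` (whose degree `1` is not divisible by `p`), and `F = F^p(X)`; so `T^p - X^p` is the minimal
polynomial of `X` over `F^p` and `[F : F^p] = p`.
-/

open Module Polynomial IntermediateField

theorem finrank_frobenius_fieldRange_eq_of_finite (F K : Type*) [Field F] [Field K] [Algebra F K]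
    [Module.Finite F K] (p : ℕ) [ExpChar F p] [ExpChar K p] :
    finrank (frobenius K p).fieldRange K = finrank (frobenius F p).fieldRange F := by
  set E := (frobenius F p).fieldRange
  set Kp := (frobenius K p).fieldRange
  let i : F ≃+* E := (frobenius F p).rangeRestrictFieldEquiv
  let j : K ≃+* Kp := (frobenius K p).rangeRestrictFieldEquiv
  let _ : Algebra E Kp := ((j : K →+* Kp).comp ((algebraMap F K).comp (i.symm : E →+* F))).toAlgebra
  have : IsScalarTower E Kp K := IsScalarTower.of_algebraMap_eq fun e => by
    obtain ⟨f, rfl⟩ := i.surjective e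
    simp only [RingHom.algebraMap_toAlgebra, RingHom.coe_comp, RingHom.coe_coe, Function.comp_apply,
      RingEquiv.symm_apply_apply, i, j]
    exact RingHom.map_frobenius (algebraMap F K) p f
  have hKp : finrank E Kp = finrank F K :=
    (Algebra.finrank_eq_of_equiv_equiv i j (by ext; simp [RingHom.algebraMap_toAlgebra])).symm
  have towerF := Module.finrank_mul_finrank E F K
  have towerKp := Module.finrank_mul_finrank E Kp K
  rw [hKp] at towerKp
  exact Nat.eq_of_mul_eq_mul_left Module.finrank_pos (by rw [towerKp, ← towerF, mul_comm])

theorem RatFunc.intDegree_pow {k : Type*} [Field k] {f : RatFunc k} (hf : f ≠ 0) (n : ℕ) :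
    (f ^ n).intDegree = n * f.intDegree := by
  induction n with
  | zero => simp
  | succ n ih =>
    rw [pow_succ, intDegree_mul (pow_ne_zero n hf) hf, ih]
    push_cast; ring

theorem RatFunc.pow_ne_X {k : Type*} [Field k] {n : ℕ} (hn : n ≠ 1) (f : RatFunc k) :
    f ^ n ≠ X := by
  intro h
  have hdeg := congrArg intDegree h
  rw [intDegree_X] at hdeg
  by_cases hf : f = 0
  · subst hf
    rcases n.eq_zero_or_pos with rfl | hn0
    · simp at hdeg
    · simp [zero_pow hn0.ne'] at hdeg
  · rw [intDegree_pow hf] at hdeg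
    exact hn (Nat.dvd_one.mp (Int.ofNat_dvd_left.mp ⟨_, hdeg.symm⟩))

theorem IntermediateField.finrank_adjoin_simple_of_pow_eq {E L : Type*} [Field E] [Field L]
    [Algebra E L] {p : ℕ} (hp : p.Prime) {a : L} {c : E} (hc : algebraMap E L c = a ^ p)
    (hX : ∀ b : E, b ^ p ≠ c) : finrank E E⟮a⟯ = p := by
  have hmonic := monic_X_pow_sub_C c hp.ne_zero
  have haev : aeval a (X ^ p - C c) = 0 := by simp [hc]
  have hint : IsIntegral E a := ⟨_, hmonic, by simpa [aeval_def] using haev⟩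
  rw [adjoin.finrank hint, ← minpoly.eq_of_irreducible_of_monic
    (X_pow_sub_C_irreducible_of_prime hp hX) haev hmonic, natDegree_X_pow_sub_C]

theorem RatFunc.finrank_frobenius_fieldRange (k : Type*) [Field k] (p : ℕ) [Fact p.Prime]
    [CharP k p] [PerfectRing k p] :
    finrank (frobenius (RatFunc k) p).fieldRange (RatFunc k) = p := by
  have hp := Fact.out (p := p.Prime)
  let E : IntermediateField k (RatFunc k) :=
    { (frobenius (RatFunc k) p).fieldRange with
      algebraMap_mem' := fun c => by
        obtain ⟨r, rfl⟩ := surjective_frobenius k p c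
        exact ⟨algebraMap k _ r, (RingHom.map_frobenius _ p r).symm⟩ }
  have hX : ∀ b : E, b ^ p ≠ ⟨X ^ p, X, rfl⟩ := by
    rintro ⟨_, f, rfl⟩ h
    exact pow_ne_X hp.ne_one f (frobenius_inj _ p (congrArg Subtype.val h))
  change finrank E (RatFunc k) = p
  rw [← finrank_top', ← RatFunc.IntermediateField.adjoin_X E]
  exact finrank_adjoin_simple_of_pow_eq hp rfl hX

theorem finrank_over_pth_powers_eq_general
    (p : ℕ) [Fact p.Prime] (K : Type*) [Field K] [CharP K p]
    [Algebra (RatFunc (ZMod p)) K]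
    [FiniteDimensional (RatFunc (ZMod p)) K] :
    Module.finrank (↥(frobenius K p).fieldRange) K = p := by
  rw [finrank_frobenius_fieldRange_eq_of_finite (RatFunc (ZMod p)) K,
    RatFunc.finrank_frobenius_fieldRange]

/-- Let `p` be a prime and `K` a finite separable field extension of `𝔽_p(x)`. Then `K`
has degree `p` over its subfield `K^p` of `p`-th powers: the dimension of `K` as a vector
space over the range of the Frobenius endomorphism `f ↦ f^p` equals `p`. (The hypothesis
`CharP K p` is automatic here, since `K` is an extension of a field of characteristic `p`.) -/
theorem finrank_over_pth_powers_eq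
    (p : ℕ) [Fact p.Prime] (K : Type*) [Field K] [CharP K p]
    [Algebra (RatFunc (ZMod p)) K]
    [FiniteDimensional (RatFunc (ZMod p)) K]
    [Algebra.IsSeparable (RatFunc (ZMod p)) K] :
    Module.finrank (↥(frobenius K p).fieldRange) K = p :=
  finrank_over_pth_powers_eq_general p K
end

section
/- Let p be a prime and K a finite separable field extension of the rational function field F_p(x). Let D be a derivation on K such that D(x) = 1, where x denotes the image in K of the variable of F_p(x) (D is then the unique extension to K of the derivation d/dx). Let v be a normalized additive discrete valuation on K and let t ∈ K be a uniformizer for v (v(t) = 1). If f, y ∈ K satisfy the p-Riccati equation D^{p-1}(f) + f^p = y, then p·v(f) ≥ min(0, v(y), p·(v(D(t)) − 1)); equivalently, v(f) ≥ min(0, v(y)/p, v(D(t)) − 1). -/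
/-!
Since `K / 𝔽_p(x)` is separable, `K = K^p(x)`, so `[K : K^p] ≤ p`. The `K^p`-multiples of
`tⁱ` (`0 ≤ i < p`) have valuations in distinct classes mod `p`, so `1, t, …, t^(p-1)` is a
`K^p`-basis of `K` and `v (∑ cᵢ tⁱ) = minᵢ v (cᵢ tⁱ)`. As `D` kills `K^p`, this gives
`v (D h) ≥ v h + v (D t) - 1` for every `h`, and `v (D t)` is finite because `D x = 1`.
Iterating, `v (D^(p-1) f) ≥ v f + (p - 1) (v (D t) - 1)`: either this exceeds `v (f^p) = p v f`,
and then `v y = p v f`, or `v f ≥ v (D t) - 1`.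
-/

namespace AddValuation

variable {R Γ₀ : Type*} [Ring R] [LinearOrderedAddCommMonoidWithTop Γ₀]
  (v : AddValuation R Γ₀)

theorem map_sum_eq_inf {ι : Type*} (s : Finset ι) (f : ι → R)
    (hf : ∀ i ∈ s, ∀ j ∈ s, i ≠ j → v (f i) ≠ ⊤ → v (f i) ≠ v (f j)) :
    v (∑ i ∈ s, f i) = s.inf (v ∘ f) := by
  classical
  induction s using Finset.induction_on with
  | empty => simp
  | @insert i s hi ih =>
    have hs := ih fun a ha b hb ↦
      hf a (Finset.mem_insert_of_mem ha) b (Finset.mem_insert_of_mem hb)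
    rw [Finset.sum_insert hi, Finset.inf_insert]
    by_cases heq : v (f i) = s.inf (v ∘ f)
    · rcases eq_or_ne (v (f i)) ⊤ with htop | htop
      · have hsum := v.map_add (f i) (∑ j ∈ s, f j)
        rw [hs, ← heq, htop, min_self, top_le_iff] at hsum
        rw [hsum]
        change ⊤ = min (v (f i)) _
        rw [← heq, htop, min_self]
      · obtain ⟨j, hj, hij⟩ := Finset.exists_mem_eq_inf s
          (Finset.nonempty_iff_ne_empty.2 (by rintro rfl; exact htop heq)) (v ∘ f)
        exact absurd (heq.trans hij) (hf i (Finset.mem_insert_self i s) j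
          (Finset.mem_insert_of_mem hj) (by rintro rfl; exact hi hj) htop)
    · rw [map_add_of_distinct_val v (hs ▸ heq), hs]
      rfl

theorem map_le_map_nsmul (x : R) (n : ℕ) : v x ≤ v (n • x) := by
  induction n with
  | zero => simp
  | succ n ih => rw [succ_nsmul]; exact v.map_le_add ih le_rfl

end AddValuation

section Derivation

variable {R A : Type*} [CommRing R] [CommRing A] [Algebra R A] (D : Derivation R A A)

theorem Derivation.map_pow_char_s9 (p : ℕ) [CharP A p] (a : A) : D (a ^ p) = 0 := by
  simp [D.leibniz_pow]

theorem Derivation.mul_map_pow (t : A) (n : ℕ) : t * D (t ^ n) = n • (t ^ n * D t) := by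
  rcases n with _ | n
  · simp
  · rw [D.leibniz_pow, smul_eq_mul, mul_smul_comm, Nat.add_sub_cancel, ← mul_assoc,
      ← pow_succ']

end Derivation

theorem Derivation.map_eq_zero_of_mem_fieldRange_frobenius {R K : Type*} [CommRing R] [Field K]
    [Algebra R K] (D : Derivation R K K) (p : ℕ) [Fact p.Prime] [CharP K p] {c : K}
    (hc : c ∈ (frobenius K p).fieldRange) : D c = 0 := by
  obtain ⟨w, rfl⟩ := hc
  exact D.map_pow_char_s9 p w

theorem pow_mem_span_pow_lt_expChar {K : Type*} [Field K] (p : ℕ) [ExpChar K p] (a : K)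
    (n : ℕ) : a ^ n ∈ Submodule.span (frobenius K p).fieldRange
      (Set.range fun i : Fin p ↦ a ^ (i : ℕ)) := by
  have hpow : a ^ n = (⟨(a ^ (n / p)) ^ p, a ^ (n / p), rfl⟩ : (frobenius K p).fieldRange) •
      a ^ (n % p) := by
    change a ^ n = (a ^ (n / p)) ^ p * a ^ (n % p)
    rw [← pow_mul, ← pow_add, Nat.div_add_mod']
  rw [hpow]
  exact Submodule.smul_mem _ _
    (Submodule.subset_span ⟨⟨n % p, Nat.mod_lt n (expChar_pos K p)⟩, rfl⟩)

section RatFunc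

variable {K : Type*} [Field K] (p : ℕ) [Fact p.Prime] [CharP K p]
  [Algebra (RatFunc (ZMod p)) K]

theorem algebraMap_mem_span_pow_X (r : RatFunc (ZMod p)) :
    algebraMap _ K r ∈ Submodule.span (frobenius K p).fieldRange
      (Set.range fun i : Fin p ↦ algebraMap (RatFunc (ZMod p)) K RatFunc.X ^ (i : ℕ)) := by
  set ι := algebraMap (RatFunc (ZMod p)) K
  have hpoly (q : Polynomial (ZMod p)) : ι (algebraMap _ _ q) ∈ Submodule.span
      (frobenius K p).fieldRange (Set.range fun i : Fin p ↦ ι RatFunc.X ^ (i : ℕ)) := by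
    induction q using Polynomial.induction_on' with
    | add q r hq hr => rw [map_add, map_add]; exact add_mem hq hr
    | monomial n c =>
      have hc : (ι (RatFunc.C c)) ^ p = ι (RatFunc.C c) := by
        rw [← map_pow, ← map_pow, ZMod.pow_card]
      rw [RatFunc.algebraMap_monomial, map_mul, map_pow]
      exact Submodule.smul_mem _ ⟨_, _, hc⟩ (pow_mem_span_pow_lt_expChar p _ n)
  have hden : ι (algebraMap _ _ r.denom) ≠ 0 :=
    (map_ne_zero _).2 (RatFunc.algebraMap_ne_zero (RatFunc.denom_ne_zero r))
  have hr : ι r = (ι (algebraMap _ _ r.denom))⁻¹ ^ p *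
      ι (algebraMap _ _ (r.num * r.denom ^ (p - 1))) := by
    conv_lhs => rw [← RatFunc.num_div_denom r]
    simp only [map_div₀, map_mul, map_pow]
    rw [pow_sub₀ _ hden (Fact.out : p.Prime).one_le, pow_one, inv_pow]
    field_simp
  rw [hr]
  exact Submodule.smul_mem _ ⟨_, _, rfl⟩ (hpoly _)

theorem span_pow_X_eq_top [Algebra.IsSeparable (RatFunc (ZMod p)) K] :
    Submodule.span (frobenius K p).fieldRange
      (Set.range fun i : Fin p ↦ algebraMap (RatFunc (ZMod p)) K RatFunc.X ^ (i : ℕ)) = ⊤ := by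
  rw [eq_top_iff]
  intro z _
  have hz : z ∈ Submodule.span (RatFunc (ZMod p)) (Set.range fun k : K ↦ id k ^ p ^ 1) := by
    rw [Field.span_map_pow_expChar_pow_eq_top_of_isSeparable p 1 (by simp)]
    trivial
  obtain ⟨c, rfl⟩ := Finsupp.mem_span_range_iff_exists_finsupp.1 hz
  refine Submodule.finsuppSum_mem _ _ c _ fun k _ ↦ ?_
  rw [Algebra.smul_def, pow_one, id, mul_comm]
  exact Submodule.smul_mem _ ⟨k ^ p, k, rfl⟩ (algebraMap_mem_span_pow_X p (c k))

end RatFunc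

section Uniformizer

variable {K : Type*} [Field K] {p : ℕ} [Fact p.Prime] [CharP K p]
  (v : AddValuation K (WithTop ℤ)) {t : K} (ht : v t = 1)
include ht

theorem AddValuation.map_sum_smul_pow_le (c : Fin p → (frobenius K p).fieldRange)
    (j : Fin p) :
    v (∑ i, c i • t ^ (i : ℕ)) ≤ v (c j • t ^ (j : ℕ)) := by
  have hval (i : Fin p) (hi : v (c i • t ^ (i : ℕ)) ≠ ⊤) :
      ∃ a : ℤ, v (c i • t ^ (i : ℕ)) = ((p * a + i : ℤ) : WithTop ℤ) := by
    obtain ⟨w, hw⟩ := (c i).2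
    rw [Subfield.smul_def, smul_eq_mul, ← hw, frobenius_def] at hi ⊢
    have hw0 : w ≠ 0 := by rintro rfl; simp [zero_pow (expChar_pos K p).ne'] at hi
    obtain ⟨a, ha⟩ := WithTop.ne_top_iff_exists.1 fun h ↦ hw0 (v.top_iff.1 h)
    refine ⟨a, ?_⟩
    rw [v.map_mul, v.map_pow, v.map_pow, ht, ← ha]
    norm_cast
    simp
  rw [v.map_sum_eq_inf]
  · exact Finset.inf_le (Finset.mem_univ j)
  · intro i _ k _ hik hi heq
    obtain ⟨a, ha⟩ := hval i hi
    obtain ⟨b, hb⟩ := hval k (heq ▸ hi)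
    rw [ha, hb, WithTop.coe_inj] at heq
    have hmod := congrArg (· % (p : ℤ)) heq
    simp only [Int.mul_add_emod_self_left] at hmod
    rw [Int.emod_eq_of_lt (by omega) (by omega), Int.emod_eq_of_lt (by omega) (by omega)]
      at hmod
    exact hik (Fin.ext (by exact_mod_cast hmod))

theorem linearIndependent_pow_of_map_eq_one :
    LinearIndependent (frobenius K p).fieldRange (fun i : Fin p ↦ t ^ (i : ℕ)) := by
  rw [Fintype.linearIndependent_iff]
  intro c hc j
  have h := v.map_sum_smul_pow_le ht c j
  rw [hc, v.map_zero, top_le_iff, v.top_iff, smul_eq_zero] at h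
  exact h.resolve_right (pow_ne_zero _ fun h0 ↦ by simp [h0] at ht)

theorem span_pow_eq_top_of_map_eq_one [Algebra (RatFunc (ZMod p)) K]
    [Algebra.IsSeparable (RatFunc (ZMod p)) K] :
    Submodule.span (frobenius K p).fieldRange (Set.range fun i : Fin p ↦ t ^ (i : ℕ)) = ⊤ := by
  have hX := span_pow_X_eq_top (K := K) p
  have : Module.Finite (frobenius K p).fieldRange K :=
    Module.finite_def.2 (Submodule.fg_def.2 ⟨_, Set.finite_range _, hX⟩)
  have hli := linearIndependent_pow_of_map_eq_one v ht
  refine hli.span_eq_top_of_card_eq_finrank' (le_antisymm hli.fintype_card_le_finrank ?_)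
  have hle := finrank_range_le_card (R := (frobenius K p).fieldRange)
    fun i : Fin p ↦ algebraMap (RatFunc (ZMod p)) K RatFunc.X ^ (i : ℕ)
  rw [Set.finrank, hX, finrank_top] at hle
  simpa using hle

theorem AddValuation.map_add_map_derivation_le {R : Type*} [CommRing R] [Algebra R K]
    (D : Derivation R K K)
    (hspan : Submodule.span (frobenius K p).fieldRange
      (Set.range fun i : Fin p ↦ t ^ (i : ℕ)) = ⊤)
    (h : K) : v h + v (D t) ≤ v (D h) + v t := by
  obtain ⟨c, rfl⟩ :=
    (Submodule.mem_span_range_iff_exists_fun _).1 (hspan ▸ Submodule.mem_top (x := h))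
  have hterm (i : Fin p) :
      t * D (c i • t ^ (i : ℕ)) = (i : ℕ) • (c i • t ^ (i : ℕ) * D t) := by
    rw [Subfield.smul_def, smul_eq_mul, D.leibniz,
      D.map_eq_zero_of_mem_fieldRange_frobenius p (c i).2, smul_zero, add_zero, smul_eq_mul,
      mul_left_comm, D.mul_map_pow, mul_smul_comm, mul_assoc]
  suffices v (∑ i, c i • t ^ (i : ℕ)) + v (D t) ≤ v (t * D (∑ i, c i • t ^ (i : ℕ))) by
    rwa [v.map_mul, add_comm (v t)] at this
  rw [map_sum D, Finset.mul_sum]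
  refine v.map_le_sum fun i _ ↦ ?_
  rw [hterm]
  calc v (∑ i, c i • t ^ (i : ℕ)) + v (D t) ≤ v (c i • t ^ (i : ℕ)) + v (D t) :=
        add_le_add_left (v.map_sum_smul_pow_le ht c i) _
    _ = v (c i • t ^ (i : ℕ) * D t) := (v.map_mul _ _).symm
    _ ≤ _ := v.map_le_map_nsmul _ _

end Uniformizer

theorem le_map_iterate {α : Type*} (v : α → WithTop ℤ) (D : α → α) (c : ℤ)
    (hD : ∀ a, v a + c ≤ v (D a)) (a : α) (k : ℕ) :
    v a + ((k * c : ℤ) : WithTop ℤ) ≤ v (D^[k] a) := by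
  induction k with
  | zero => simp
  | succ k ih =>
    rw [Function.iterate_succ_apply', Nat.cast_succ, add_one_mul, WithTop.coe_add, ← add_assoc]
    exact (add_le_add_left ih _).trans (hD _)

theorem AddValuation.min_le_nsmul_of_pRiccati {K : Type*} [Field K] {p : ℕ} (hp : 2 ≤ p)
    (v : AddValuation K (WithTop ℤ)) {R : Type*} [CommRing R] [Algebra R K] (D : Derivation R K K)
    {t x : K} (ht : v t = 1) (hx : D x = 1) (hkey : ∀ h, v h + v (D t) ≤ v (D h) + v t)
    {f y : K} (hric : D^[p - 1] f + f ^ p = y) :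
    min 0 (min (v y) (p • (v (D t) - 1))) ≤ p • v f := by
  obtain ⟨c, hc⟩ : ∃ c : ℤ, (c : WithTop ℤ) = v (D t) := by
    refine WithTop.ne_top_iff_exists.1 fun htop ↦ ?_
    have := hkey x
    rw [htop, add_top, hx, v.map_one, ht, top_le_iff] at this
    exact absurd this (by decide)
  have hstep (a : K) : v a + ((c - 1 : ℤ) : WithTop ℤ) ≤ v (D a) := by
    have hc1 : ((c - 1 : ℤ) : WithTop ℤ) + 1 = c := by norm_cast; rw [sub_add_cancel]
    rw [← WithTop.add_le_add_iff_right WithTop.one_ne_top, add_assoc, hc1, hc, ← ht]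
    exact hkey a
  rcases eq_or_ne f 0 with rfl | hf
  · rw [← v.map_pow, zero_pow (by omega), v.map_zero]
    exact le_top
  obtain ⟨m, hm⟩ := WithTop.ne_top_iff_exists.1 fun h ↦ hf (v.top_iff.1 h)
  rw [← hm, ← hc]
  by_cases hlt : v (f ^ p) < v (D^[p - 1] f)
  · have hy : v y = v (f ^ p) := hric ▸ v.map_add_eq_of_lt_right hlt
    rw [hy, v.map_pow, ← hm]
    exact min_le_of_right_le (min_le_left _ _)
  · have := (le_map_iterate v D (c - 1) hstep f (p - 1)).trans (not_lt.1 hlt)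
    rw [v.map_pow, ← hm] at this
    norm_cast at this
    have hcm : c - 1 ≤ m := by
      rw [nsmul_eq_mul, Nat.cast_sub (by omega), Nat.cast_one] at this
      exact le_of_mul_le_mul_left (a := (p : ℤ) - 1) (by linarith) (by omega)
    refine min_le_of_right_le (min_le_of_right_le ?_)
    norm_cast
    exact nsmul_le_nsmul_right hcm p

theorem pRiccati_valuation_lower_bound_general
    (p : ℕ) [Fact p.Prime] (K : Type*) [Field K]
    [Algebra (RatFunc (ZMod p)) K]
    [Algebra.IsSeparable (RatFunc (ZMod p)) K]
    (D : K → K)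
    (hadd : ∀ u v : K, D (u + v) = D u + D v)
    (hleib : ∀ u v : K, D (u * v) = u * D v + v * D u)
    (hx : D (algebraMap (RatFunc (ZMod p)) K RatFunc.X) = 1)
    (v : K → WithTop ℤ)
    (hv_top : ∀ a : K, v a = ⊤ ↔ a = 0)
    (hv_mul : ∀ a b : K, v (a * b) = v a + v b)
    (hv_add : ∀ a b : K, min (v a) (v b) ≤ v (a + b))
    (t : K) (ht : v t = 1)
    (f y : K) (hric : D^[p - 1] f + f ^ p = y) :
    min 0 (min (v y) (p • (v (D t) - 1))) ≤ p • v f := by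
  have : CharP K p :=
    charP_of_injective_algebraMap (algebraMap (RatFunc (ZMod p)) K).injective p
  have hv_one : v 1 = 0 := by
    obtain ⟨a, ha⟩ := WithTop.ne_top_iff_exists.1 fun h ↦ one_ne_zero ((hv_top 1).1 h)
    have h := hv_mul 1 1
    rw [one_mul, ← ha] at h
    norm_cast at h
    rw [← ha, show a = 0 by omega]
    rfl
  let vK : AddValuation K (WithTop ℤ) := .of v ((hv_top 0).2 rfl) hv_one hv_add hv_mul
  let DK : Derivation ℤ K K := .mk' (AddMonoidHom.mk' D hadd).toIntLinearMap hleib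
  exact vK.min_le_nsmul_of_pRiccati (Fact.out : p.Prime).two_le DK ht hx
    (vK.map_add_map_derivation_le ht DK (span_pow_eq_top_of_map_eq_one vK ht)) hric

/-- Let `p` be a prime and `K` a finite separable field extension of `𝔽_p(x)`, with `D`
the derivation on `K` extending `d/dx` (an additive map satisfying the Leibniz rule, with
`D(x) = 1`). Let `v` be a normalized additive discrete valuation on `K` (values in
`ℤ ∪ {∞}`, with `v a = ∞ ↔ a = 0`, multiplicativity, the ultrametric inequality, and
surjectivity onto `ℤ`) and let `t` be a uniformizer for `v`. If `f, y ∈ K` satisfy the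
`p`-Riccati equation `D^{p-1}(f) + f^p = y`, then
`p·v(f) ≥ min(0, v(y), p·(v(D(t)) − 1))`. -/
theorem pRiccati_valuation_lower_bound
    (p : ℕ) [Fact p.Prime] (K : Type*) [Field K]
    [Algebra (RatFunc (ZMod p)) K]
    [FiniteDimensional (RatFunc (ZMod p)) K]
    [Algebra.IsSeparable (RatFunc (ZMod p)) K]
    (D : K → K)
    (hadd : ∀ u v : K, D (u + v) = D u + D v)
    (hleib : ∀ u v : K, D (u * v) = u * D v + v * D u)
    (hx : D (algebraMap (RatFunc (ZMod p)) K RatFunc.X) = 1)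
    (v : K → WithTop ℤ)
    (hv_top : ∀ a : K, v a = ⊤ ↔ a = 0)
    (hv_mul : ∀ a b : K, v (a * b) = v a + v b)
    (hv_add : ∀ a b : K, min (v a) (v b) ≤ v (a + b))
    (hv_surj : ∀ n : ℤ, ∃ a : K, v a = (n : WithTop ℤ))
    (t : K) (ht : v t = 1)
    (f y : K) (hric : D^[p - 1] f + f ^ p = y) :
    min 0 (min (v y) (p • (v (D t) - 1))) ≤ p • v f :=
  pRiccati_valuation_lower_bound_general p K D hadd hleib hx v hv_top hv_mul hv_add t ht f y hric
end
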